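/- Define a metric m_C on the edges of G*π by well-founded recursion on the minimum rank of an edge's endpoints: m_C(x,y) = min( w₀(x,y), min over all lower triangles {x,y,z} of {x,y} of (m_C(x,z) + m_C(z,y)) ), where w₀(x,y) = w(x,y) if {x,y} is an edge of G and w₀(x,y) = ∞ otherwise. (The recursion is well-founded because for every lower triangle {x,y,z}, the edges {x,z} and {z,y} have strictly smaller minimum endpoint rank than {x,y}.) Then m_C fulfills the lower triangle inequality and respects w; consequently m_C is customized. -/

import Mathlib

open SimpleGraph
open scoped ENNReal

variable {V : Type*}

/-- One step of vertex contraction: remove `v` from the current graph and add an edge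
between every pair of its current neighbors. -/
def chStep (H : SimpleGraph V) (v : V) : SimpleGraph V where
  Adj a b := a ≠ b ∧ a ≠ v ∧ b ≠ v ∧ (H.Adj a b ∨ (H.Adj v a ∧ H.Adj v b))
  symm := by
    constructor
    rintro a b ⟨h1, h2, h3, h4⟩
    refine ⟨h1.symm, h3, h2, ?_⟩
    rcases h4 with h | ⟨ha, hb⟩
    · exact Or.inl h.symm
    · exact Or.inr ⟨hb, ha⟩
  loopless := ⟨fun a h => h.1 rfl⟩

/-- All edges ever present while contracting the vertices of the list in order:
the edges of the initial graph together with all added shortcuts. -/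
def chList : SimpleGraph V → List V → SimpleGraph V
  | H, [] => H
  | H, v :: l => H ⊔ chList (chStep H v) l

/-- The rank of a vertex with respect to the contraction order `π`. -/
def rk {n : ℕ} (π : Fin n ≃ V) (v : V) : ℕ := (π.symm v : ℕ)

/-- The contraction hierarchy `G*π`: contract `π 0, π 1, …` in this order and collect
all original edges and all added shortcuts. -/
def chGraph {n : ℕ} (G : SimpleGraph V) (π : Fin n ≃ V) : SimpleGraph V :=
  chList G ((List.finRange n).map ⇑π)

/-- A list of vertices is up-down w.r.t. a rank function: ranks strictly increase
along a prefix and strictly decrease along the remaining suffix, the two parts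
meeting at the maximum-rank vertex. -/
def IsUpDown (r : V → ℕ) (l : List V) : Prop :=
  ∃ l₁ x l₂, l = l₁ ++ x :: l₂ ∧
    List.Chain' (fun a b => r a < r b) (l₁ ++ [x]) ∧
    List.Chain' (fun a b => r b < r a) (x :: l₂)

/-- Reachability in the upward directed graph `G^∧π` (edges of `G*π` directed from
lower to higher rank): the vertex set of the search space `SS v`. -/
def UpReach {n : ℕ} (G : SimpleGraph V) (π : Fin n ≃ V) (v u : V) : Prop :=
  Relation.ReflTransGen (fun a b => (chGraph G π).Adj a b ∧ rk π a < rk π b) v u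

/-- Length of a walk: the sum of the weights of its edges. -/
noncomputable def wlen {H : SimpleGraph V} (m : V → V → ℝ≥0∞) {s t : V}
    (p : H.Walk s t) : ℝ≥0∞ :=
  (p.darts.map (fun d => m d.toProd.1 d.toProd.2)).sum

/-- Shortest path distance in a graph `H` under edge weights `m`. -/
noncomputable def gdist (H : SimpleGraph V) (m : V → V → ℝ≥0∞) (s t : V) : ℝ≥0∞ :=
  ⨅ (p : H.Walk s t), wlen m p

/-- Minimum length of an up-down `s`-`t` path in `G*π`. -/
noncomputable def updist {n : ℕ} (G : SimpleGraph V) (π : Fin n ≃ V)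
    (m : V → V → ℝ≥0∞) (s t : V) : ℝ≥0∞ :=
  ⨅ (p : (chGraph G π).Walk s t) (_ : IsUpDown (rk π) p.support), wlen m p

/-- Minimum length of a strictly rank-increasing `u`-`v` path in `G*π`. -/
noncomputable def upOnlyDist {n : ℕ} (G : SimpleGraph V) (π : Fin n ≃ V)
    (m : V → V → ℝ≥0∞) (u v : V) : ℝ≥0∞ :=
  ⨅ (p : (chGraph G π).Walk u v)
    (_ : List.Chain' (fun a b => rk π a < rk π b) p.support), wlen m p

/-- `S` is a balanced separator of the subgraph of `G` induced by `U`. -/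
def IsBalancedSepOn [DecidableEq V] (G : SimpleGraph V) (U S : Finset V) : Prop :=
  S ⊆ U ∧ ∃ A B : Finset V, A ⊆ U ∧ B ⊆ U ∧
    Disjoint A B ∧ Disjoint A S ∧ Disjoint B S ∧ A ∪ B ∪ S = U ∧
    (∀ a ∈ A, ∀ b ∈ B, ¬ G.Adj a b) ∧
    3 * A.card ≤ 2 * U.card ∧ 3 * B.card ≤ 2 * U.card

/-- Nested dissection orders (as lists, earliest contracted first, separator last)
of induced subgraphs of `G`, in which the separator chosen at every recursion step on
a `k`-vertex subgraph is balanced and has cardinality at most `c * k ^ α`. -/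
inductive IsNDOrder [DecidableEq V] (G : SimpleGraph V) (c α : ℝ) : Finset V → List V → Prop
  | empty : IsNDOrder G c α ∅ []
  | step {U S A B : Finset V} {lA lB lS : List V} :
      Disjoint A B → Disjoint A S → Disjoint B S → A ∪ B ∪ S = U →
      (∀ a ∈ A, ∀ b ∈ B, ¬ G.Adj a b) →
      3 * A.card ≤ 2 * U.card → 3 * B.card ≤ 2 * U.card →
      ((S.card : ℝ) ≤ c * (U.card : ℝ) ^ α) →
      lS.Nodup → lS.toFinset = S →
      IsNDOrder G c α A lA → IsNDOrder G c α B lB →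
      IsNDOrder G c α U (lA ++ lB ++ lS)

/-- Number of vertices of the search space `SS v` in `G^∧π`. -/
noncomputable def nVertsSS {n : ℕ} (G : SimpleGraph V) (π : Fin n ≃ V) (v : V) : ℕ :=
  {u | UpReach G π v u}.ncard

/-- Number of arcs of the search space `SS v` in `G^∧π`: arcs of `G^∧π` with both
endpoints reachable from `v`. -/
noncomputable def nArcsSS {n : ℕ} (G : SimpleGraph V) (π : Fin n ≃ V) (v : V) : ℕ :=
  {q : V × V | (chGraph G π).Adj q.1 q.2 ∧ rk π q.1 < rk π q.2 ∧
    UpReach G π v q.1 ∧ UpReach G π v q.2}.ncard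

/-- The rank sequence of a walk: for each edge, the minimum of the ranks of its
endpoints, sorted in decreasing order. -/
def rankSeq {H : SimpleGraph V} (r : V → ℕ) {s t : V} (p : H.Walk s t) : List ℕ :=
  (p.darts.map (fun d => min (r d.toProd.1) (r d.toProd.2))).insertionSort (· ≥ ·)

/-- Directed length of a walk in `G*π` under a pair of directed metrics `(mu, md)`:
each edge traversed from lower rank to higher rank costs its upward weight,
each edge traversed from higher rank to lower rank costs its downward weight. -/
noncomputable def dlen {H : SimpleGraph V} (r : V → ℕ) (mu md : V → V → ℝ≥0∞)
    {s t : V} (p : H.Walk s t) : ℝ≥0∞ :=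
  (p.darts.map (fun d =>
    if r d.toProd.1 < r d.toProd.2 then mu d.toProd.1 d.toProd.2
    else md d.toProd.2 d.toProd.1)).sum

/-- Length of a directed walk `s :: l` under arc weights `wD`. -/
noncomputable def dWalkLen (wD : V → V → ℝ≥0∞) : V → List V → ℝ≥0∞
  | _, [] => 0
  | s, x :: l => wD s x + dWalkLen wD x l

/-- Shortest directed path distance in the directed graph `D` under arc weights `wD`. -/
noncomputable def ddist (D : V → V → Prop) (wD : V → V → ℝ≥0∞) (s t : V) : ℝ≥0∞ :=
  ⨅ (l : List V) (_ : List.Chain D s l ∧ l.getLastD s = t), dWalkLen wD s l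

/-! Every value produced by the recurrence is the length of a `G`-walk, so on each edge of
`G*π` the metric `m` is at least the `G`-distance, while `m ≤ w` on the edges of `G`; replacing
walks edge by edge then shows that the two shortest-path distances coincide. For customization,
an arbitrary walk is rebuilt from its end: prepending an edge to an up-down walk either keeps it
up-down, or creates a valley `s, x, y` with `x` lowest; contracting `x` inserted the shortcut
`{s, y}`, which by the lower triangle inequality is no longer than `s, x, y`. -/

open Function

section ContractionHierarchy

lemma le_chList (H : SimpleGraph V) : ∀ l : List V, H ≤ chList H l
  | [] => le_rfl
  | _ :: _ => le_sup_left

lemma chList_not_adj {v : V} : ∀ {H : SimpleGraph V} (l : List V), (∀ a, ¬ H.Adj v a) →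
    ∀ a, ¬ (chList H l).Adj v a
  | _, [], hv => hv
  | H, u :: l, hv => by
    rintro a (h | h)
    · exact hv a h
    · refine chList_not_adj l (fun b hb => ?_) a h
      obtain ⟨-, -, -, h' | ⟨h', -⟩⟩ := hb
      exacts [hv b h', hv u h'.symm]

/-- The edges at `z` in the hierarchy are those present when `z` is contracted, and contracting
`z` joins any two of them. -/
lemma chList_append_cons_adj {x y z : V} : ∀ {H : SimpleGraph V} (l₁ : List V) {l₂ : List V},
    x ∉ l₁ → y ∉ l₁ → z ∉ l₁ → x ≠ y →
    (chList H (l₁ ++ z :: l₂)).Adj x z → (chList H (l₁ ++ z :: l₂)).Adj z y →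
    (chList H (l₁ ++ z :: l₂)).Adj x y
  | H, [], l₂, _, _, _, hxy, hxz, hzy => by
    have hz : ∀ a, ¬ (chList (chStep H z) l₂).Adj z a :=
      chList_not_adj l₂ fun a h => h.2.1 rfl
    have hxzH : H.Adj x z := hxz.resolve_right fun h => hz x h.symm
    have hzyH : H.Adj z y := hzy.resolve_right (hz y)
    exact Or.inr <| le_chList _ l₂ ⟨hxy, hxzH.ne, hzyH.ne', Or.inr ⟨hxzH.symm, hzyH⟩⟩
  | H, v :: l₁, l₂, hx, hy, hz, hxy, hxz, hzy => by
    simp only [List.mem_cons, not_or] at hx hy hz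
    have lift : ∀ {a b : V}, a ≠ v → b ≠ v → (chList H (v :: (l₁ ++ z :: l₂))).Adj a b →
        (chList (chStep H v) (l₁ ++ z :: l₂)).Adj a b := by
      rintro a b ha hb (h | h)
      exacts [le_chList _ _ ⟨h.ne, ha, hb, Or.inl h⟩, h]
    exact Or.inr <| chList_append_cons_adj l₁ hx.2 hy.2 hz.2 hxy
      (lift hx.1 hz.1 hxz) (lift hz.1 hy.1 hzy)

lemma rk_injective {n : ℕ} (π : Fin n ≃ V) : Injective (rk π) :=
  Fin.val_injective.comp π.symm.injective

lemma exists_map_finRange_eq_append_cons {n : ℕ} (π : Fin n ≃ V) (z : V) :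
    ∃ l₁ l₂, (List.finRange n).map π = l₁ ++ z :: l₂ ∧ ∀ u ∈ l₁, rk π u < rk π z := by
  set l := (List.finRange n).map π
  have hk : rk π z < l.length := by simp [l, rk]
  have hz : l[rk π z] = z := by simp [l, rk]
  refine ⟨l.take (rk π z), l.drop (rk π z + 1), ?_, fun u hu => ?_⟩
  · conv_lhs => rw [← List.take_append_drop (rk π z) l, List.drop_eq_getElem_cons hk, hz]
  · obtain ⟨j, hj, rfl⟩ := List.mem_take_iff_getElem.mp hu
    simp only [l, rk, List.getElem_map, List.getElem_finRange, Equiv.symm_apply_apply,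
      Fin.val_cast] at hj ⊢
    omega

lemma chGraph_adj_of_lower {n : ℕ} (G : SimpleGraph V) (π : Fin n ≃ V) {x y z : V}
    (hxz : (chGraph G π).Adj x z) (hzy : (chGraph G π).Adj z y)
    (hzx : rk π z < rk π x) (hzy' : rk π z < rk π y) (hxy : x ≠ y) :
    (chGraph G π).Adj x y := by
  obtain ⟨l₁, l₂, hl, hlt⟩ := exists_map_finRange_eq_append_cons π z
  rw [chGraph, hl] at hxz hzy ⊢
  exact chList_append_cons_adj l₁ (fun h => (hlt x h).not_gt hzx)
    (fun h => (hlt y h).not_gt hzy') (fun h => (hlt z h).false) hxy hxz hzy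

end ContractionHierarchy

section UpDown

variable {r : V → ℕ}

lemma isUpDown_singleton (x : V) : IsUpDown r [x] :=
  ⟨[], x, [], rfl, List.isChain_singleton x, List.isChain_singleton x⟩

lemma isUpDown_of_isChain {x : V} {l : List V}
    (h : List.IsChain (fun a b => r b < r a) (x :: l)) : IsUpDown r (x :: l) :=
  ⟨[], x, l, rfl, List.isChain_singleton x, h⟩

lemma IsUpDown.cons {s x : V} {l : List V} (hud : IsUpDown r (x :: l)) (hs : r s < r x) :
    IsUpDown r (s :: x :: l) := by
  obtain ⟨l₁, p, l₂, he, hup, hdn⟩ := hud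
  refine ⟨s :: l₁, p, l₂, by rw [he]; rfl, List.isChain_cons.mpr ⟨?_, hup⟩, hdn⟩
  cases l₁ <;> simp_all

lemma IsUpDown.tail {x y : V} {l : List V} (hud : IsUpDown r (x :: y :: l)) (hxy : r x < r y) :
    IsUpDown r (y :: l) := by
  obtain ⟨_ | ⟨a, l₁⟩, p, l₂, he, hup, hdn⟩ := hud
  · simp only [List.nil_append, List.cons.injEq] at he
    obtain ⟨rfl, rfl⟩ := he
    exact absurd (List.isChain_cons_cons.mp hdn).1 hxy.not_gt
  · simp only [List.cons_append, List.cons.injEq] at he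
    exact ⟨l₁, p, l₂, he.2, hup.tail, hdn⟩

lemma IsUpDown.isChain_of_gt {x y : V} {l : List V} (hud : IsUpDown r (x :: y :: l))
    (hyx : r y < r x) : List.IsChain (fun a b => r b < r a) (x :: y :: l) := by
  obtain ⟨_ | ⟨a, l₁⟩, p, l₂, he, hup, hdn⟩ := hud
  · rw [List.nil_append] at he
    rwa [he]
  · simp only [List.cons_append, List.cons.injEq] at he
    obtain ⟨rfl, he⟩ := he
    have : (l₁ ++ [p]).head? = some y := by cases l₁ <;> simp_all
    exact absurd (List.isChain_cons.mp hup |>.1 y this) hyx.not_gt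

end UpDown

section WalkLength

variable {H : SimpleGraph V} (m : V → V → ℝ≥0∞)

@[simp] lemma wlen_nil {s : V} : wlen m (Walk.nil : H.Walk s s) = 0 := by simp [wlen]

@[simp] lemma wlen_cons {s x t : V} (h : H.Adj s x) (p : H.Walk x t) :
    wlen m (Walk.cons h p) = m s x + wlen m p := by simp [wlen]

lemma wlen_append {s x t : V} (p : H.Walk s x) (q : H.Walk x t) :
    wlen m (p.append q) = wlen m p + wlen m q := by simp [wlen, Walk.darts_append]

lemma gdist_le_wlen {s t : V} (p : H.Walk s t) : gdist H m s t ≤ wlen m p := iInf_le _ p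

lemma gdist_le_of_adj {s t : V} (h : H.Adj s t) : gdist H m s t ≤ m s t := by
  simpa using gdist_le_wlen m (Walk.cons h Walk.nil)

lemma gdist_triangle (s x t : V) : gdist H m s t ≤ gdist H m s x + gdist H m x t := by
  simp only [gdist, ENNReal.iInf_add, ENNReal.add_iInf]
  exact le_iInf₂ fun q p => (gdist_le_wlen m (p.append q)).trans_eq (wlen_append m p q)

lemma gdist_le_gdist_of_adj {H' : SimpleGraph V} {m' : V → V → ℝ≥0∞}
    (h : ∀ a b, H.Adj a b → gdist H' m' a b ≤ m a b) (s t : V) :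
    gdist H' m' s t ≤ gdist H m s t := by
  refine le_iInf fun p => ?_
  induction p with
  | nil => exact (gdist_le_wlen m' Walk.nil).trans_eq (by simp)
  | @cons a b c hab p ih =>
    rw [wlen_cons]
    exact (gdist_triangle m' a b c).trans (add_le_add (h a b hab) ih)

end WalkLength

def LowerTriangleIneq (H : SimpleGraph V) (r : V → ℕ) (m : V → V → ℝ≥0∞) : Prop :=
  ∀ x y z, H.Adj x y → H.Adj x z → H.Adj z y → r z < r x → r z < r y → m x y ≤ m x z + m z y

section Customization

variable {H : SimpleGraph V} {r : V → ℕ} {m : V → V → ℝ≥0∞}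

lemma exists_isUpDown_cons_le (hr : Injective r)
    (hfill : ∀ x y z, H.Adj x z → H.Adj z y → r z < r x → r z < r y → x ≠ y → H.Adj x y)
    (hm : LowerTriangleIneq H r m) {x t : V} (q : H.Walk x t) (hq : IsUpDown r q.support)
    {s : V} (hs : H.Adj s x) :
    ∃ q' : H.Walk s t, IsUpDown r q'.support ∧ wlen m q' ≤ m s x + wlen m q := by
  induction q generalizing s with
  | nil =>
    refine ⟨Walk.cons hs Walk.nil, ?_, by simp⟩
    rcases (hr.ne hs.ne).lt_or_gt with hsx | hxs
    · exact (isUpDown_singleton _).cons hsx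
    · exact isUpDown_of_isChain (List.isChain_pair.mpr hxs)
  | @cons x y t hxy q ih =>
    have hq_supp : (Walk.cons hxy q).support = x :: y :: q.support.tail := by
      rw [Walk.support_cons, q.cons_tail_support]
    rw [hq_supp] at hq
    have hcons_supp : (Walk.cons hs (Walk.cons hxy q)).support = s :: x :: y :: q.support.tail :=
      by rw [Walk.support_cons, hq_supp]
    rcases (hr.ne hs.ne).lt_or_gt with hsx | hxs
    · exact ⟨Walk.cons hs (Walk.cons hxy q), hcons_supp ▸ hq.cons hsx, le_of_eq (by simp)⟩
    rcases (hr.ne hxy.ne).lt_or_gt with hxy' | hyx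
    · have hq' : IsUpDown r q.support := q.cons_tail_support ▸ hq.tail hxy'
      by_cases hsy : s = y
      · subst hsy
        exact ⟨q, hq', by rw [wlen_cons]; exact le_add_self.trans le_add_self⟩
      have hsy' := hfill s y x hs hxy hxs hxy' hsy
      obtain ⟨q', hq'ud, hle⟩ := ih hq' hsy'
      refine ⟨q', hq'ud, ?_⟩
      calc wlen m q' ≤ m s y + wlen m q := hle
        _ ≤ m s x + m x y + wlen m q := by gcongr; exact hm s y x hsy' hs hxy hxs hxy'
        _ = m s x + wlen m (Walk.cons hxy q) := by rw [wlen_cons, add_assoc]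
    · refine ⟨Walk.cons hs (Walk.cons hxy q), ?_, le_of_eq (by simp)⟩
      exact hcons_supp ▸ isUpDown_of_isChain
        (List.isChain_cons_cons.mpr ⟨hxs, hq.isChain_of_gt hyx⟩)

lemma exists_isUpDown_le (hr : Injective r)
    (hfill : ∀ x y z, H.Adj x z → H.Adj z y → r z < r x → r z < r y → x ≠ y → H.Adj x y)
    (hm : LowerTriangleIneq H r m) {s t : V} (p : H.Walk s t) :
    ∃ q : H.Walk s t, IsUpDown r q.support ∧ wlen m q ≤ wlen m p := by
  induction p with
  | nil => exact ⟨Walk.nil, isUpDown_singleton _, le_rfl⟩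
  | cons h p ih =>
    obtain ⟨q, hq, hle⟩ := ih
    obtain ⟨q', hq', hle'⟩ := exists_isUpDown_cons_le hr hfill hm q hq h
    exact ⟨q', hq', hle'.trans (by rw [wlen_cons]; gcongr)⟩

lemma updist_eq_gdist {n : ℕ} (G : SimpleGraph V) (π : Fin n ≃ V)
    (hm : LowerTriangleIneq (chGraph G π) (rk π) m) (s t : V) :
    updist G π m s t = gdist (chGraph G π) m s t := by
  refine le_antisymm (le_iInf fun p => ?_) (le_iInf₂ fun p _ => gdist_le_wlen m p)
  obtain ⟨q, hq, hle⟩ :=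
    exists_isUpDown_le (rk_injective π) (fun _ _ _ => chGraph_adj_of_lower G π) hm p
  exact (iInf₂_le q hq).trans hle

end Customization

def SatisfiesCustomizationRec {n : ℕ} (G : SimpleGraph V) [DecidableRel G.Adj] (π : Fin n ≃ V)
    (w m : V → V → ℝ≥0∞) : Prop :=
  ∀ x y, (chGraph G π).Adj x y →
    m x y = min (if G.Adj x y then w x y else ⊤)
      (⨅ (z : V) (_ : (chGraph G π).Adj x z ∧ (chGraph G π).Adj z y ∧
        rk π z < rk π x ∧ rk π z < rk π y), (m x z + m z y))

section Recurrence

variable {n : ℕ} {G : SimpleGraph V} [DecidableRel G.Adj] {π : Fin n ≃ V} {w m : V → V → ℝ≥0∞}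

lemma SatisfiesCustomizationRec.lowerTriangleIneq (hrec : SatisfiesCustomizationRec G π w m) :
    LowerTriangleIneq (chGraph G π) (rk π) m := fun x y z hxy hxz hzy hzx hzy' =>
  (hrec x y hxy).trans_le <| (min_le_right _ _).trans (iInf₂_le z ⟨hxz, hzy, hzx, hzy'⟩)

lemma SatisfiesCustomizationRec.le_weight (hrec : SatisfiesCustomizationRec G π w m) {x y : V}
    (h : G.Adj x y) : m x y ≤ w x y := by
  rw [hrec x y (le_chList G _ h)]
  exact (min_le_left _ _).trans_eq (if_pos h)

lemma SatisfiesCustomizationRec.gdist_le (hrec : SatisfiesCustomizationRec G π w m) {x y : V}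
    (h : (chGraph G π).Adj x y) : gdist G w x y ≤ m x y := by
  induction hk : min (rk π x) (rk π y) using Nat.strong_induction_on generalizing x y with
  | _ k ih =>
    rw [hrec x y h]
    refine le_min ?_ (le_iInf₂ fun z ⟨hxz, hzy, hzx, hzy'⟩ => ?_)
    · split_ifs with hG
      exacts [gdist_le_of_adj w hG, le_top]
    · calc gdist G w x y ≤ gdist G w x z + gdist G w z y := gdist_triangle w x z y
        _ ≤ m x z + m z y := add_le_add (ih _ (by omega) hxz rfl) (ih _ (by omega) hzy rfl)

end Recurrence

theorem stmt14_general {V : Type*} {n : ℕ} (G : SimpleGraph V) [DecidableRel G.Adj]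
    (π : Fin n ≃ V) (w : V → V → ℝ≥0∞)
    (m : V → V → ℝ≥0∞)
    (hrec : ∀ x y, (chGraph G π).Adj x y →
      m x y = min (if G.Adj x y then w x y else ⊤)
        (⨅ (z : V) (_ : (chGraph G π).Adj x z ∧ (chGraph G π).Adj z y ∧
          rk π z < rk π x ∧ rk π z < rk π y), (m x z + m z y))) :
    (∀ x y z, (chGraph G π).Adj x y → (chGraph G π).Adj x z →
      (chGraph G π).Adj z y → rk π z < rk π x → rk π z < rk π y →
      m x y ≤ m x z + m z y) ∧
    (∀ s t, gdist (chGraph G π) m s t = gdist G w s t) ∧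
    (∀ s t, updist G π m s t = gdist (chGraph G π) m s t) := by
  have hrec : SatisfiesCustomizationRec G π w m := hrec
  refine ⟨hrec.lowerTriangleIneq, fun s t => le_antisymm ?_ ?_,
    updist_eq_gdist G π hrec.lowerTriangleIneq⟩
  · exact gdist_le_gdist_of_adj w
      (fun a b h => (gdist_le_of_adj m (le_chList G _ h)).trans (hrec.le_weight h)) s t
  · exact gdist_le_gdist_of_adj m (fun a b h => hrec.gdist_le h) s t

/-- The metric `m_C` defined by the well-founded recurrence
`m_C x y = min (w₀ x y) (min over lower triangles {x,y,z} of m_C x z + m_C z y)`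
(where `w₀ x y = w x y` for edges of `G` and `∞` otherwise) fulfills the lower
triangle inequality and respects `w`; consequently it is customized. -/
theorem stmt14 {V : Type*} {n : ℕ} (G : SimpleGraph V) [DecidableRel G.Adj]
    (hG : G.Connected) (π : Fin n ≃ V) (w : V → V → ℝ≥0∞)
    (hw_symm : ∀ a b, w a b = w b a)
    (hw_pos : ∀ a b, G.Adj a b → 0 < w a b ∧ w a b < ⊤)
    (m : V → V → ℝ≥0∞) (hm_symm : ∀ a b, m a b = m b a)
    (hrec : ∀ x y, (chGraph G π).Adj x y →
      m x y = min (if G.Adj x y then w x y else ⊤)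
        (⨅ (z : V) (_ : (chGraph G π).Adj x z ∧ (chGraph G π).Adj z y ∧
          rk π z < rk π x ∧ rk π z < rk π y), (m x z + m z y))) :
    (∀ x y z, (chGraph G π).Adj x y → (chGraph G π).Adj x z →
      (chGraph G π).Adj z y → rk π z < rk π x → rk π z < rk π y →
      m x y ≤ m x z + m z y) ∧
    (∀ s t, gdist (chGraph G π) m s t = gdist G w s t) ∧
    (∀ s t, updist G π m s t = gdist (chGraph G π) m s t) :=
  stmt14_general G π w m hrec
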